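/- arXiv:2502.18944 — 9 statements merged into one kernel-verified Lean document; each statement's English description precedes it below -/
import Mathlib

section
/- Let G be a finite 2-qBMG with color classes U and W, and let Γ be a subgroup of Aut_I(G). Then the Γ-quotient G/Γ is again a 2-qBMG. -/
/-! Since `Γ` acts by automorphisms, an edge of `G/Γ` between two orbits can be realized in `G`
starting from any prescribed vertex of either orbit. Lifting edges one at a time from a
common endpoint turns every configuration forbidden or required by (N1)–(N3) in `G/Γ` into the
same configuration in `G`. Irreflexivity of `G/Γ` holds because it is again properly 2-colored:
the color classes are unions of orbits. -/

/-- Two vertices are equivalent (`x ∼̇ y`) if they have the same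
out-neighbors and the same in-neighbors. -/
def dotSim {V : Type*} (E : V → V → Prop) (x y : V) : Prop :=
  (∀ z, E x z ↔ E y z) ∧ (∀ z, E z x ↔ E z y)

/-- `U` and `W` are the color classes of a 2-colored digraph with edge relation `E`:
they partition the vertex set and every edge has one endpoint in each class. -/
def IsTwoColored {V : Type*} (E : V → V → Prop) (U W : Set V) : Prop :=
  (∀ v, v ∈ U ∨ v ∈ W) ∧ (∀ v, ¬(v ∈ U ∧ v ∈ W)) ∧
    ∀ u v, E u v → (u ∈ U ∧ v ∈ W) ∨ (u ∈ W ∧ v ∈ U)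

/-- Axiom (N1). -/
def AxN1 {V : Type*} (E : V → V → Prop) : Prop :=
  ∀ u v, u ≠ v → ¬E u v → ¬E v u → ∀ w t, ¬(E u t ∧ E v w ∧ E t w)

/-- Axiom (N2): bi-transitivity. -/
def AxN2 {V : Type*} (E : V → V → Prop) : Prop :=
  ∀ u v w t, E u v → E v w → E w t → E u t

/-- Axiom (N3). -/
def AxN3 {V : Type*} (E : V → V → Prop) : Prop :=
  ∀ u v w, E u w → E v w → (∀ z, E u z → E v z) ∨ (∀ z, E v z → E u z)

/-- A 2-qBMG: an irreflexive 2-colored digraph satisfying (N1), (N2), (N3). -/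
def IsQBMG {V : Type*} (E : V → V → Prop) (U W : Set V) : Prop :=
  (∀ v, ¬E v v) ∧ IsTwoColored E U W ∧ AxN1 E ∧ AxN2 E ∧ AxN3 E

/-- An automorphism of the digraph: a permutation mapping edges to edges. -/
def IsAut {V : Type*} (E : V → V → Prop) (π : Equiv.Perm V) : Prop :=
  ∀ u v, E u v → E (π u) (π v)

/-- A color-preserving automorphism of the 2-colored digraph. -/
def IsAutI {V : Type*} (E : V → V → Prop) (U W : Set V) (π : Equiv.Perm V) : Prop :=
  IsAut E π ∧ (∀ v ∈ U, π v ∈ U) ∧ (∀ v ∈ W, π v ∈ W)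

/-- The setoid on the vertex set whose classes are the `Γ`-orbits,
for a subgroup `Γ` of the permutation group of the vertices. -/
def orbSetoid {V : Type*} (Γ : Subgroup (Equiv.Perm V)) : Setoid V where
  r x y := ∃ g ∈ Γ, g x = y
  iseqv := by
    constructor
    · exact fun x => ⟨1, Γ.one_mem, rfl⟩
    · rintro x y ⟨g, hg, rfl⟩
      exact ⟨g⁻¹, Γ.inv_mem hg, by simp⟩
    · rintro x y z ⟨g, hg, rfl⟩ ⟨h, hh, rfl⟩
      exact ⟨h * g, Γ.mul_mem hh hg, Equiv.Perm.mul_apply h g x⟩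

theorem IsTwoColored.irrefl {V : Type*} {E : V → V → Prop} {U W : Set V}
    (h : IsTwoColored E U W) (v : V) : ¬E v v := fun hv => by
  rcases h.2.2 v v hv with huw | huw <;> exact h.2.1 v (by tauto)

namespace orbSetoid

variable {V : Type*} {Γ : Subgroup (Equiv.Perm V)}

local notation "π" => Quotient.mk (orbSetoid Γ)

theorem mk_eq_mk_iff {x y : V} : π x = π y ↔ ∃ g ∈ Γ, g x = y := Quotient.eq

theorem mk_apply {g : Equiv.Perm V} (hg : g ∈ Γ) (x : V) : π (g x) = π x :=
  (mk_eq_mk_iff.2 ⟨g, hg, rfl⟩).symm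

section Colors

variable {U W : Set V}

theorem mem_of_mk_eq_mk (hU : ∀ g ∈ Γ, ∀ v ∈ U, g v ∈ U) {x y : V} (hxy : π x = π y)
    (hx : x ∈ U) : y ∈ U := by
  obtain ⟨g, hg, rfl⟩ := mk_eq_mk_iff.1 hxy
  exact hU g hg x hx

theorem mk_mem_image_iff (hU : ∀ g ∈ Γ, ∀ v ∈ U, g v ∈ U) {x : V} : π x ∈ π '' U ↔ x ∈ U :=
  ⟨fun ⟨_, hx', hx'x⟩ => mem_of_mk_eq_mk hU hx'x hx', Set.mem_image_of_mem π⟩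

theorem isTwoColored_map_mk {E : V → V → Prop} (h : IsTwoColored E U W)
    (hU : ∀ g ∈ Γ, ∀ v ∈ U, g v ∈ U) (hW : ∀ g ∈ Γ, ∀ v ∈ W, g v ∈ W) :
    IsTwoColored (Relation.Map E π π) (π '' U) (π '' W) := by
  refine ⟨Quotient.ind fun x => ?_, Quotient.ind fun x => ?_, ?_⟩
  · exact (h.1 x).imp (Set.mem_image_of_mem π) (Set.mem_image_of_mem π)
  · rw [mk_mem_image_iff hU, mk_mem_image_iff hW]
    exact h.2.1 x
  · rintro _ _ ⟨x, y, hxy, rfl, rfl⟩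
    exact (h.2.2 x y hxy).imp
      (And.imp (Set.mem_image_of_mem π) (Set.mem_image_of_mem π))
      (And.imp (Set.mem_image_of_mem π) (Set.mem_image_of_mem π))

end Colors

section Edges

variable {E : V → V → Prop}

theorem exists_rel_of_map_mk_left (hΓ : ∀ g ∈ Γ, IsAut E g) {x : V}
    {b : Quotient (orbSetoid Γ)} (h : Relation.Map E π π (π x) b) : ∃ y, E x y ∧ π y = b := by
  obtain ⟨x', y, hE, hx, rfl⟩ := h
  obtain ⟨g, hg, rfl⟩ := mk_eq_mk_iff.1 hx
  exact ⟨g y, hΓ g hg _ _ hE, mk_apply hg y⟩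

theorem exists_rel_of_map_mk_right (hΓ : ∀ g ∈ Γ, IsAut E g) {y : V}
    {a : Quotient (orbSetoid Γ)} (h : Relation.Map E π π a (π y)) : ∃ x, E x y ∧ π x = a := by
  obtain ⟨x, y', hE, rfl, hy⟩ := h
  obtain ⟨g, hg, rfl⟩ := mk_eq_mk_iff.1 hy
  exact ⟨g x, hΓ g hg _ _ hE, mk_apply hg x⟩

theorem map_mk_out_subset (hΓ : ∀ g ∈ Γ, IsAut E g) {u v : V} (huv : ∀ z, E u z → E v z)
    (c : Quotient (orbSetoid Γ)) (hc : Relation.Map E π π (π u) c) :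
    Relation.Map E π π (π v) c := by
  obtain ⟨z, huz, rfl⟩ := exists_rel_of_map_mk_left hΓ hc
  exact ⟨v, z, huv z huz, rfl, rfl⟩

theorem axN1_map_mk (hΓ : ∀ g ∈ Γ, IsAut E g) (h : AxN1 E) : AxN1 (Relation.Map E π π) := by
  intro a b hab hnab hnba c d ⟨had, hbc, hdc⟩
  obtain ⟨w, rfl⟩ := Quotient.exists_rep c
  obtain ⟨v, hvw, rfl⟩ := exists_rel_of_map_mk_right hΓ hbc
  obtain ⟨t, htw, rfl⟩ := exists_rel_of_map_mk_right hΓ hdc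
  obtain ⟨u, hut, rfl⟩ := exists_rel_of_map_mk_right hΓ had
  exact h u v (fun huv => hab (congrArg π huv)) (fun huv => hnab ⟨u, v, huv, rfl, rfl⟩)
    (fun hvu => hnba ⟨v, u, hvu, rfl, rfl⟩) w t ⟨hut, hvw, htw⟩

theorem axN2_map_mk (hΓ : ∀ g ∈ Γ, IsAut E g) (h : AxN2 E) : AxN2 (Relation.Map E π π) := by
  intro a b c d hab hbc hcd
  obtain ⟨u, rfl⟩ := Quotient.exists_rep a
  obtain ⟨v, huv, rfl⟩ := exists_rel_of_map_mk_left hΓ hab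
  obtain ⟨w, hvw, rfl⟩ := exists_rel_of_map_mk_left hΓ hbc
  obtain ⟨t, hwt, rfl⟩ := exists_rel_of_map_mk_left hΓ hcd
  exact ⟨u, t, h u v w t huv hvw hwt, rfl, rfl⟩

theorem axN3_map_mk (hΓ : ∀ g ∈ Γ, IsAut E g) (h : AxN3 E) : AxN3 (Relation.Map E π π) := by
  intro a b c hac hbc
  obtain ⟨w, rfl⟩ := Quotient.exists_rep c
  obtain ⟨u, huw, rfl⟩ := exists_rel_of_map_mk_right hΓ hac
  obtain ⟨v, hvw, rfl⟩ := exists_rel_of_map_mk_right hΓ hbc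
  exact (h u v w huw hvw).imp (map_mk_out_subset hΓ) (map_mk_out_subset hΓ)

end Edges

theorem isQBMG_map_mk {E : V → V → Prop} {U W : Set V} (hG : IsQBMG E U W)
    (hΓ : ∀ g ∈ Γ, IsAutI E U W g) :
    IsQBMG (Relation.Map E π π) (π '' U) (π '' W) := by
  obtain ⟨-, hTC, hN1, hN2, hN3⟩ := hG
  have hAut : ∀ g ∈ Γ, IsAut E g := fun g hg => (hΓ g hg).1
  have hTC' := isTwoColored_map_mk hTC (fun g hg => (hΓ g hg).2.1) (fun g hg => (hΓ g hg).2.2)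
  exact ⟨hTC'.irrefl, hTC', axN1_map_mk hAut hN1, axN2_map_mk hAut hN2, axN3_map_mk hAut hN3⟩

end orbSetoid

theorem stmt_0_general {V : Type*} (E : V → V → Prop) (U W : Set V)
    (hG : IsQBMG E U W) (Γ : Subgroup (Equiv.Perm V)) (hΓ : ∀ g ∈ Γ, IsAutI E U W g) :
    IsQBMG
      (fun a b : Quotient (orbSetoid Γ) =>
        ∃ x y : V, E x y ∧ Quotient.mk (orbSetoid Γ) x = a ∧ Quotient.mk (orbSetoid Γ) y = b)
      {a : Quotient (orbSetoid Γ) | ∃ x ∈ U, Quotient.mk (orbSetoid Γ) x = a}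
      {a : Quotient (orbSetoid Γ) | ∃ x ∈ W, Quotient.mk (orbSetoid Γ) x = a} :=
  orbSetoid.isQBMG_map_mk hG hΓ

/-- If `G` is a finite 2-qBMG with color classes `U`, `W` and `Γ` is a
subgroup of `Aut_I(G)` (a subgroup of the permutation group all of whose elements are
color-preserving automorphisms), then the `Γ`-quotient `G/Γ` — whose vertices are the
`Γ`-orbits, whose color classes are the orbits contained in `U` resp. `W`, and whose
edges are induced by the edges of `G` — is again a 2-qBMG. -/
theorem stmt_0 {V : Type*} [Fintype V] [DecidableEq V] (E : V → V → Prop) (U W : Set V)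
    (hG : IsQBMG E U W) (Γ : Subgroup (Equiv.Perm V)) (hΓ : ∀ g ∈ Γ, IsAutI E U W g) :
    IsQBMG
      (fun a b : Quotient (orbSetoid Γ) =>
        ∃ x y : V, E x y ∧ Quotient.mk (orbSetoid Γ) x = a ∧ Quotient.mk (orbSetoid Γ) y = b)
      {a : Quotient (orbSetoid Γ) | ∃ x ∈ U, Quotient.mk (orbSetoid Γ) x = a}
      {a : Quotient (orbSetoid Γ) | ∃ x ∈ W, Quotient.mk (orbSetoid Γ) x = a} :=
  stmt_0_general E U W hG Γ hΓ
end

section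
/- Let G be a finite 2-qBMG and let s be a vertex of G. Let G′ be the digraph obtained from G by adding one new vertex s′, placed in the same color class as s, together with exactly the new edges s′u for every u ∈ N⁺(s) and vs′ for every v ∈ N⁻(s) (in particular there is no edge between s and s′). Then G′ is a 2-qBMG, and s ∼̇ s′ in G′. -/
/-- The edge relation of the blow-up `G′` of `G` at the vertex `s`: the new vertex
(`none`) gets exactly the edges `s′u` for `u ∈ N⁺(s)` and `vs′` for `v ∈ N⁻(s)`;
in particular there is no edge between `s` and `s′`. -/
def blowUpEdges {V : Type*} (E : V → V → Prop) (s : V) :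
    Option V → Option V → Prop
  | some u, some v => E u v
  | none, some v => E s v
  | some u, none => E u s
  | none, none => False

/-- The color class of the blow-up containing a given color class `C` of `G`:
the new vertex `s′` is added to `C` precisely when `s ∈ C`. -/
def blowUpColor {V : Type*} (C : Set V) (s : V) : Set (Option V) :=
  {o : Option V | (∃ u ∈ C, o = some u) ∨ (o = none ∧ s ∈ C)}

open Function

section

variable {V V' : Type*} {E : V → V → Prop} {U W : Set V}

theorem IsTwoColored.not_triangle (h : IsTwoColored E U W) {a b c : V}
    (hab : E a b) (hac : E a c) : ¬E b c := by
  intro hbc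
  obtain ⟨-, hdisj, hedge⟩ := h
  have := hdisj a
  have := hdisj b
  have := hdisj c
  rcases hedge _ _ hab with hab | hab <;>
    rcases hedge _ _ hac with hac | hac <;>
    rcases hedge _ _ hbc with hbc | hbc <;> tauto

theorem IsTwoColored.comap (h : IsTwoColored E U W) (f : V' → V) :
    IsTwoColored (E on f) (f ⁻¹' U) (f ⁻¹' W) :=
  ⟨fun v => h.1 (f v), fun v => h.2.1 (f v), fun u v => h.2.2 (f u) (f v)⟩

theorem AxN1.comap (hN1 : AxN1 E) (hc : IsTwoColored E U W) (f : V' → V) : AxN1 (E on f) := by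
  rintro u v huv hnuv hnvu w t ⟨hut, hvw, htw⟩
  by_cases hf : f u = f v
  · exact hc.not_triangle hut (hf ▸ hvw) htw
  · exact hN1 (f u) (f v) hf hnuv hnvu (f w) (f t) ⟨hut, hvw, htw⟩

theorem AxN2.comap (hN2 : AxN2 E) (f : V' → V) : AxN2 (E on f) :=
  fun u v w t => hN2 (f u) (f v) (f w) (f t)

theorem AxN3.comap (hN3 : AxN3 E) (f : V' → V) : AxN3 (E on f) := fun u v w huw hvw =>
  (hN3 (f u) (f v) (f w) huw hvw).imp (fun h z => h (f z)) (fun h z => h (f z))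

theorem IsQBMG.comap (h : IsQBMG E U W) (f : V' → V) :
    IsQBMG (E on f) (f ⁻¹' U) (f ⁻¹' W) :=
  ⟨fun v => h.1 (f v), h.2.1.comap f, h.2.2.1.comap h.2.1 f, h.2.2.2.1.comap f,
    h.2.2.2.2.comap f⟩

theorem dotSim_onFun_of_eq {f : V' → V} {x y : V'} (hxy : f x = f y) : dotSim (E on f) x y :=
  ⟨fun z => by simp only [onFun, hxy], fun z => by simp only [onFun, hxy]⟩

theorem blowUpEdges_eq_onFun {s : V} (hs : ¬E s s) :
    blowUpEdges E s = (E on (Option.getD · s)) := by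
  ext (_ | _) (_ | _) <;> simp [blowUpEdges, onFun, hs]

theorem blowUpColor_eq_preimage (C : Set V) (s : V) :
    blowUpColor C s = (Option.getD · s) ⁻¹' C := by
  ext (_ | _) <;> simp [blowUpColor]

end

theorem stmt_6_general {V : Type*} (E : V → V → Prop) (U W : Set V)
    (hG : IsQBMG E U W) (s : V) :
    IsQBMG (blowUpEdges E s) (blowUpColor U s) (blowUpColor W s) ∧
      dotSim (blowUpEdges E s) (some s) none := by
  rw [blowUpEdges_eq_onFun (hG.1 s), blowUpColor_eq_preimage, blowUpColor_eq_preimage]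
  exact ⟨hG.comap _, dotSim_onFun_of_eq rfl⟩

/-- Let `G` be a finite 2-qBMG and `s` a vertex.  The digraph `G′`
obtained from `G` by adding one new vertex `s′` (in the same color class as `s`)
together with exactly the edges `s′u` for `u ∈ N⁺(s)` and `vs′` for `v ∈ N⁻(s)`
is again a 2-qBMG, and `s ∼̇ s′` in `G′`. -/
theorem stmt_6 {V : Type*} [Fintype V] [DecidableEq V] (E : V → V → Prop) (U W : Set V)
    (hG : IsQBMG E U W) (s : V) :
    IsQBMG (blowUpEdges E s) (blowUpColor U s) (blowUpColor W s) ∧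
      dotSim (blowUpEdges E s) (some s) none :=
  stmt_6_general E U W hG s
end

section
/- For every k ≥ 1 and all positive integers n₁, …, n_k there exists a finite 2-qBMG G whose group Aut_I(G) of color-preserving automorphisms contains a normal subgroup isomorphic to the direct product Sym(n₁) × ⋯ × Sym(n_k) of symmetric groups of degrees n₁, …, n_k. -/
/-!
Take the disjoint union of in-stars, the `i`-th one with `n i` leaves pointing to a centre `i`.
Every edge goes from a leaf to a centre, so there are no directed paths of length two and
(N1), (N2) hold vacuously, while (N3) holds because each leaf has out-degree one. The
permutations of the leaves that fix every centre and keep each leaf in its star form a copy of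
`Sym(n 0) × ⋯ × Sym(n (k-1))`; it is normal because every automorphism maps two leaves of a
common star to leaves of a common star.
-/

open Equiv Function Set Sum

section GraphRel

variable {α β : Type*} (f : α → β)

def graphRel : α ⊕ β → α ⊕ β → Prop
  | inl a, inr b => f a = b
  | _, _ => False

variable {f}

theorem graphRel_iff {u v : α ⊕ β} : graphRel f u v ↔ ∃ a, u = inl a ∧ v = inr (f a) := by
  cases u <;> cases v <;> simp [graphRel, eq_comm]

theorem not_graphRel_of_graphRel {u v w : α ⊕ β} (huv : graphRel f u v) :
    ¬graphRel f v w := by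
  obtain ⟨a, -, rfl⟩ := graphRel_iff.1 huv
  cases w <;> exact id

theorem isTwoColored_graphRel : IsTwoColored (graphRel f) (range inl) (range inr) := by
  refine ⟨?_, ?_, fun u v huv => ?_⟩
  · rintro (a | b)
    exacts [Or.inl ⟨a, rfl⟩, Or.inr ⟨b, rfl⟩]
  · rintro v ⟨⟨a, rfl⟩, ⟨b, hb⟩⟩
    exact inr_ne_inl hb
  · obtain ⟨a, rfl, rfl⟩ := graphRel_iff.1 huv
    exact Or.inl ⟨⟨a, rfl⟩, ⟨f a, rfl⟩⟩

theorem isQBMG_graphRel : IsQBMG (graphRel f) (range inl) (range inr) := by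
  refine ⟨fun v hv => not_graphRel_of_graphRel hv hv, isTwoColored_graphRel,
    fun u v _ _ _ w t ⟨hut, _, htw⟩ => not_graphRel_of_graphRel hut htw,
    fun u v w t huv hvw _ => (not_graphRel_of_graphRel huv hvw).elim,
    fun u v w huw hvw => Or.inl fun z huz => ?_⟩
  obtain ⟨a, rfl, rfl⟩ := graphRel_iff.1 huw
  obtain ⟨a', rfl, ha'⟩ := graphRel_iff.1 hvw
  rcases z with _ | b
  exacts [huz.elim, (inr_injective ha').symm.trans huz]

theorem IsAut.map_eq_map_of_graphRel {g : Perm (α ⊕ β)} (hg : IsAut (graphRel f) g)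
    {x y : α ⊕ β} (hxy : Sum.map f id x = Sum.map f id y) :
    Sum.map f id (g x) = Sum.map f id (g y) := by
  have image_leaf (a : α) : ∃ c, g (inl a) = inl c ∧ g (inr (f a)) = inr (f c) :=
    graphRel_iff.1 (hg _ _ (graphRel_iff.2 ⟨a, rfl, rfl⟩))
  rcases x with a | b <;> rcases y with a' | b' <;> simp only [Sum.map_inl, Sum.map_inr,
    inl.injEq, inr.injEq, reduceCtorEq, id] at hxy
  · obtain ⟨c, hc, hfc⟩ := image_leaf a
    obtain ⟨c', hc', hfc'⟩ := image_leaf a'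
    rw [← hxy] at hfc'
    rw [hc, hc', Sum.map_inl, Sum.map_inl, inr_injective (hfc.symm.trans hfc')]
  · rw [hxy]

end GraphRel

section FiberwisePerm

variable {X Y : Type*}

def fiberwisePerm (p : X → Y) : Subgroup (Perm X) where
  carrier := {π | ∀ x, p (π x) = p x}
  mul_mem' hπ hσ x := (hπ _).trans (hσ x)
  one_mem' _ := rfl
  inv_mem' {π} hπ x := by simpa using (hπ (π⁻¹ x)).symm

theorem conj_mem_fiberwisePerm {p : X → Y} {g : Perm X}
    (hg : ∀ x y, p x = p y → p (g x) = p (g y)) {π : Perm X} (hπ : π ∈ fiberwisePerm p) :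
    g * π * g⁻¹ ∈ fiberwisePerm p := fun x => by
  simpa using hg _ _ (hπ (g⁻¹ x))

end FiberwisePerm

section FiberwisePermSum

variable {α β : Type*} {f : α → β} {π : Perm (α ⊕ β)}

theorem apply_inr_of_mem_fiberwisePerm (hπ : π ∈ fiberwisePerm (Sum.map f id)) (b : β) :
    π (inr b) = inr b := by
  have := hπ (inr b)
  rcases h : π (inr b) with c | b' <;> simp_all

theorem exists_apply_inl_of_mem_fiberwisePerm (hπ : π ∈ fiberwisePerm (Sum.map f id)) (a : α) :
    ∃ c, π (inl a) = inl c ∧ f c = f a := by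
  have := hπ (inl a)
  rcases h : π (inl a) with c | b <;> simp_all

theorem isAutI_graphRel_of_mem_fiberwisePerm (hπ : π ∈ fiberwisePerm (Sum.map f id)) :
    IsAutI (graphRel f) (range inl) (range inr) π := by
  refine ⟨fun u v huv => ?_, ?_, ?_⟩
  · obtain ⟨a, rfl, rfl⟩ := graphRel_iff.1 huv
    obtain ⟨c, hc, hfc⟩ := exists_apply_inl_of_mem_fiberwisePerm hπ a
    exact graphRel_iff.2 ⟨c, hc, by rw [apply_inr_of_mem_fiberwisePerm hπ, hfc]⟩
  · rintro _ ⟨a, rfl⟩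
    obtain ⟨c, hc, -⟩ := exists_apply_inl_of_mem_fiberwisePerm hπ a
    exact ⟨c, hc.symm⟩
  · rintro _ ⟨b, rfl⟩
    exact ⟨b, (apply_inr_of_mem_fiberwisePerm hπ b).symm⟩

end FiberwisePermSum

section BlockPerm

variable {ι : Type*} (γ : ι → Type*)

def blockPerm : (∀ i, Perm (γ i)) →* Perm ((Σ i, γ i) ⊕ ι) :=
  (Perm.sumCongrHom _ _).comp (MonoidHom.inl _ _) |>.comp (Perm.sigmaCongrRightHom γ)

theorem blockPerm_injective : Injective (blockPerm γ) :=
  Perm.sumCongrHom_injective.comp (fun _ _ h => congrArg Prod.fst h) |>.comp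
    Perm.sigmaCongrRightHom_injective

theorem exists_apply_inl_sigma_of_mem_fiberwisePerm {π : Perm ((Σ i, γ i) ⊕ ι)}
    (hπ : π ∈ fiberwisePerm (Sum.map Sigma.fst id)) (i : ι) (a : γ i) :
    ∃ b, π (inl ⟨i, a⟩) = inl ⟨i, b⟩ := by
  obtain ⟨⟨j, b⟩, h, rfl⟩ := exists_apply_inl_of_mem_fiberwisePerm hπ ⟨i, a⟩
  exact ⟨b, h⟩

theorem range_blockPerm :
    (blockPerm γ).range = fiberwisePerm (Sum.map (Sigma.fst : (Σ i, γ i) → ι) id) := by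
  ext π
  constructor
  · rintro ⟨σ, rfl⟩ (⟨i, a⟩ | j) <;> rfl
  intro hπ
  choose σ hσ using exists_apply_inl_sigma_of_mem_fiberwisePerm γ hπ
  have σ_bijective (i : ι) : Bijective (σ i) := by
    refine ⟨fun a a' h => ?_, fun b => ?_⟩
    · exact sigma_mk_injective (inl_injective (π.injective (by rw [hσ, hσ, h])))
    · obtain ⟨a, ha⟩ := exists_apply_inl_sigma_of_mem_fiberwisePerm γ (inv_mem hπ) i b
      refine ⟨a, ?_⟩
      simpa [hσ] using (congrArg π ha).symm
  refine ⟨fun i => .ofBijective (σ i) (σ_bijective i), Equiv.ext ?_⟩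
  rintro (⟨i, a⟩ | j)
  exacts [(hσ i a).symm, (apply_inr_of_mem_fiberwisePerm hπ j).symm]

end BlockPerm

theorem stmt_7_general (k : ℕ) (n : Fin k → ℕ) :
    ∃ (V : Type) (_ : Fintype V) (_ : DecidableEq V)
      (E : V → V → Prop) (U W : Set V),
      IsQBMG E U W ∧
        ∃ N : Subgroup (Equiv.Perm V),
          (∀ π ∈ N, IsAutI E U W π) ∧
          (∀ g : Equiv.Perm V, IsAutI E U W g → ∀ π ∈ N, g * π * g⁻¹ ∈ N) ∧
          Nonempty (N ≃* ∀ i : Fin k, Equiv.Perm (Fin (n i))) := by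
  let γ (i : Fin k) := Fin (n i)
  refine ⟨(Σ i, γ i) ⊕ Fin k, inferInstance, inferInstance, graphRel Sigma.fst, range inl,
    range inr, isQBMG_graphRel, (blockPerm γ).range, ?_, ?_,
    ⟨(MonoidHom.ofInjective (blockPerm_injective γ)).symm⟩⟩
  all_goals rw [range_blockPerm]
  · exact fun π => isAutI_graphRel_of_mem_fiberwisePerm
  · exact fun g hg π hπ => conj_mem_fiberwisePerm (p := Sum.map Sigma.fst id)
      (fun _ _ => hg.1.map_eq_map_of_graphRel) hπ

/-- For every `k ≥ 1` and all positive integers `n 0, …, n (k-1)`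
there is a finite 2-qBMG `G` whose group of color-preserving automorphisms contains a
normal subgroup isomorphic to `Sym(n 0) × ⋯ × Sym(n (k-1))`; "normal in `Aut_I(G)`"
is expressed by closure under conjugation by every color-preserving automorphism. -/
theorem stmt_7 (k : ℕ) (hk : 1 ≤ k) (n : Fin k → ℕ) (hn : ∀ i, 1 ≤ n i) :
    ∃ (V : Type) (_ : Fintype V) (_ : DecidableEq V)
      (E : V → V → Prop) (U W : Set V),
      IsQBMG E U W ∧
        ∃ N : Subgroup (Equiv.Perm V),
          (∀ π ∈ N, IsAutI E U W π) ∧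
          (∀ g : Equiv.Perm V, IsAutI E U W g → ∀ π ∈ N, g * π * g⁻¹ ∈ N) ∧
          Nonempty (N ≃* ∀ i : Fin k, Equiv.Perm (Fin (n i))) :=
  stmt_7_general k n
end

section
/- Let G be a finite 2-qBMG and let x, y be vertices lying in the same Aut_I(G)-orbit, i.e., y = h(x) for some color-preserving automorphism h of G. If x and y have a common out-neighbor, then x ∼̇ y. -/
/-
On a finite digraph the inverse of an automorphism `h` is a power of `h`, hence again an
automorphism, so `h` is an isomorphism. Hence `h` maps `N⁺(x)` bijectively
onto `N⁺(y)`; these finite sets are comparable by (N3), so they coincide. For in-neighbors, let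
`z → x`. If `y → z` then `x → z`, so `x → h z → y`, and (N2) along `z → x → h z → y` gives
`z → y`; if `z` and `y` are non-adjacent, the path `z → x → w` together with `y → w` contradicts
(N1). By symmetry (using `h⁻¹`), `N⁻(x) = N⁻(y)`.
-/

namespace IsAut

variable {V : Type*} {E : V → V → Prop}

def submonoid (E : V → V → Prop) : Submonoid (Equiv.Perm V) where
  carrier := {π | IsAut E π}
  one_mem' _ _ huv := huv
  mul_mem' hf hg _ _ huv := hf _ _ (hg _ _ huv)

theorem inv [Finite V] {h : Equiv.Perm V} (ha : IsAut E h) : IsAut E h⁻¹ := by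
  have hinv : h⁻¹ ∈ Submonoid.powers h :=
    mem_powers_iff_mem_zpowers.2 (Subgroup.inv_mem _ (Subgroup.mem_zpowers h))
  exact (Submonoid.powers_le (P := submonoid E)).2 ha hinv

theorem apply_iff [Finite V] {h : Equiv.Perm V} (ha : IsAut E h) (u v : V) :
    E (h u) (h v) ↔ E u v := by
  refine ⟨fun huv => ?_, ha u v⟩
  simpa using ha.inv _ _ huv

theorem image_setOf_adj [Finite V] {h : Equiv.Perm V} (ha : IsAut E h) (x : V) :
    h '' {z | E x z} = {z | E (h x) z} := by
  ext z
  rw [Set.mem_image_equiv, Set.mem_ofPred_eq, Set.mem_ofPred_eq, ← ha.apply_iff,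
    Equiv.apply_symm_apply]

theorem adj_iff_of_common_adj [Finite V] (n3 : AxN3 E) {h : Equiv.Perm V} (ha : IsAut E h)
    {x w : V} (hxw : E x w) (hyw : E (h x) w) (z : V) : E x z ↔ E (h x) z := by
  have hcard : {z | E (h x) z}.ncard = {z | E x z}.ncard := by
    rw [← ha.image_setOf_adj, Set.ncard_image_of_injective _ h.injective]
  suffices {z | E x z} = {z | E (h x) z} from Set.ext_iff.1 this z
  rcases n3 x (h x) w hxw hyw with hsub | hsub
  · exact Set.eq_of_subset_of_ncard_le hsub hcard.le
  · exact (Set.eq_of_subset_of_ncard_le hsub hcard.ge).symm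

theorem adj_apply_of_adj {h : Equiv.Perm V} (ha : IsAut E h) (irr : ∀ v, ¬E v v)
    (n1 : AxN1 E) (n2 : AxN2 E) {x w : V} (hout : ∀ t, E x t ↔ E (h x) t) (hxw : E x w)
    {z : V} (hzx : E z x) : E z (h x) := by
  by_contra hzy
  have hne : z ≠ h x := by
    rintro rfl
    exact irr x ((hout x).2 hzx)
  by_cases hyz : E (h x) z
  · have hxhz : E x (h z) := (hout _).2 (ha _ _ ((hout z).2 hyz))
    exact hzy (n2 z x (h z) (h x) hzx hxhz (ha _ _ hzx))
  · exact n1 z (h x) hne hzy hyz w x ⟨hzx, (hout w).1 hxw, hxw⟩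

end IsAut

theorem stmt_8_general {V : Type*} [Fintype V] (E : V → V → Prop) (U W : Set V)
    (hG : IsQBMG E U W) (x y : V) (h : Equiv.Perm V) (hh : IsAutI E U W h)
    (hxy : y = h x) (w : V) (hxw : E x w) (hyw : E y w) :
    dotSim E x y := by
  obtain ⟨irr, -, n1, n2, n3⟩ := hG
  obtain ⟨ha, -, -⟩ := hh
  subst hxy
  have hout : ∀ z, E x z ↔ E (h x) z := ha.adj_iff_of_common_adj n3 hxw hyw
  have hout' : ∀ z, E (h x) z ↔ E (h⁻¹ (h x)) z := by simpa using fun z => (hout z).symm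
  refine ⟨hout, fun z => ⟨ha.adj_apply_of_adj irr n1 n2 hout hxw, fun hzy => ?_⟩⟩
  simpa using ha.inv.adj_apply_of_adj irr n1 n2 hout' hyw hzy

/-- Let `G` be a finite 2-qBMG and let `x`, `y` be vertices lying in the
same `Aut_I(G)`-orbit, i.e. `y = h x` for a color-preserving automorphism `h`.  If `x`
and `y` have a common out-neighbor, then `x ∼̇ y`. -/
theorem stmt_8 {V : Type*} [Fintype V] [DecidableEq V] (E : V → V → Prop) (U W : Set V)
    (hG : IsQBMG E U W) (x y : V) (h : Equiv.Perm V) (hh : IsAutI E U W h)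
    (hxy : y = h x) (w : V) (hxw : E x w) (hyw : E y w) :
    dotSim E x y :=
  stmt_8_general E U W hG x y h hh hxy w hxw hyw
end

section
/- Let G be a finite 2-qBMG and let x, y be vertices with a common out-neighbor such that |N⁺(x)| = |N⁺(y)| and |N⁻(x)| = |N⁻(y)|. If there exists a vertex w with xw ∈ E and wy ∈ E, then x ∼̇ y. -/
/-! By bi-transitivity (N2), every in-neighbor of `x` is an in-neighbor of `y` (via `x → w → y`),
and by (N3) the out-neighborhoods of `x` and `y`, which share `w₀`, are nested. In a finite
graph, nested sets of equal cardinality coincide. -/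

theorem iff_of_imp_of_ncard_setOf_eq {V : Type*} [Finite V] {p q : V → Prop}
    (hpq : ∀ z, p z → q z) (hcard : {z | p z}.ncard = {z | q z}.ncard) (z : V) :
    p z ↔ q z :=
  Set.ext_iff.mp (Set.eq_of_subset_of_ncard_le hpq hcard.ge) z

theorem AxN3.out_iff_of_ncard_eq {V : Type*} [Finite V] {E : V → V → Prop} (hN3 : AxN3 E)
    {x y w₀ : V} (hxw₀ : E x w₀) (hyw₀ : E y w₀)
    (hout : {z | E x z}.ncard = {z | E y z}.ncard) (z : V) :
    E x z ↔ E y z := by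
  rcases hN3 x y w₀ hxw₀ hyw₀ with hxy | hyx
  · exact iff_of_imp_of_ncard_setOf_eq hxy hout z
  · exact (iff_of_imp_of_ncard_setOf_eq hyx hout.symm z).symm

theorem AxN2.in_iff_of_ncard_eq {V : Type*} [Finite V] {E : V → V → Prop} (hN2 : AxN2 E)
    {x y w : V} (hxw : E x w) (hwy : E w y)
    (hin : {z | E z x}.ncard = {z | E z y}.ncard) (z : V) :
    E z x ↔ E z y :=
  iff_of_imp_of_ncard_setOf_eq (fun z hzx => hN2 z x w y hzx hxw hwy) hin z

theorem stmt_9_general {V : Type*} [Fintype V] (E : V → V → Prop) (U W : Set V)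
    (hG : IsQBMG E U W) (x y w₀ : V) (hxw₀ : E x w₀) (hyw₀ : E y w₀)
    (hout : {z : V | E x z}.ncard = {z : V | E y z}.ncard)
    (hin : {z : V | E z x}.ncard = {z : V | E z y}.ncard)
    (w : V) (hxw : E x w) (hwy : E w y) :
    dotSim E x y :=
  let ⟨_, _, _, hN2, hN3⟩ := hG
  ⟨hN3.out_iff_of_ncard_eq hxw₀ hyw₀ hout, hN2.in_iff_of_ncard_eq hxw hwy hin⟩

/-- Let `G` be a finite 2-qBMG and let `x`, `y` be vertices with a
common out-neighbor such that `|N⁺(x)| = |N⁺(y)|` and `|N⁻(x)| = |N⁻(y)|`.  If there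
is a vertex `w` with `xw ∈ E` and `wy ∈ E`, then `x ∼̇ y`. -/
theorem stmt_9 {V : Type*} [Fintype V] [DecidableEq V] (E : V → V → Prop) (U W : Set V)
    (hG : IsQBMG E U W) (x y w₀ : V) (hxw₀ : E x w₀) (hyw₀ : E y w₀)
    (hout : {z : V | E x z}.ncard = {z : V | E y z}.ncard)
    (hin : {z : V | E z x}.ncard = {z : V | E z y}.ncard)
    (w : V) (hxw : E x w) (hwy : E w y) :
    dotSim E x y :=
  stmt_9_general E U W hG x y w₀ hxw₀ hyw₀ hout hin w hxw hwy
end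

section
/- Let G be a finite thin 2-qBMG. If an automorphism g of G fixes a vertex v, then g fixes every vertex in the in-neighborhood N⁻(v) of v. -/
theorem Set.eq_of_subset_or_subset_of_ncard_eq {α : Type*} [Finite α] {s t : Set α}
    (h : s ⊆ t ∨ t ⊆ s) (hc : s.ncard = t.ncard) : s = t := by
  rcases h with h | h
  · exact Set.eq_of_subset_of_ncard_le h hc.ge
  · exact (Set.eq_of_subset_of_ncard_le h hc.le).symm

section Digraph

variable {V : Type*} {E : V → V → Prop}

def outNbhd (E : V → V → Prop) (x : V) : Set V := {z | E x z}

def inNbhd (E : V → V → Prop) (x : V) : Set V := {z | E z x}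

theorem dotSim_iff {x y : V} :
    dotSim E x y ↔ outNbhd E x = outNbhd E y ∧ inNbhd E x = inNbhd E y := by
  simp only [dotSim, outNbhd, inNbhd, Set.ext_iff, Set.mem_ofPred_eq]

namespace IsAut

variable [Finite V] {g : Equiv.Perm V}

/-- `g` injects the finite edge set into itself, hence maps it onto itself. -/
theorem apply_apply_iff (hg : IsAut E g) {x y : V} : E (g x) (g y) ↔ E x y := by
  refine ⟨fun hxy => ?_, hg x y⟩
  let edges : Set (V × V) := {p | E p.1 p.2}
  have hmaps : Set.MapsTo (Prod.map g g) edges edges := fun p hp => hg p.1 p.2 hp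
  have hinj : Set.InjOn (Prod.map g g) edges := (g.injective.prodMap g.injective).injOn
  have hsurj : Set.SurjOn (Prod.map g g) edges edges :=
    ((edges.toFinite.injOn_iff_bijOn_of_mapsTo hmaps).mp hinj).surjOn
  obtain ⟨⟨a, b⟩, hab, hga⟩ := hsurj (show (g x, g y) ∈ edges from hxy)
  obtain ⟨rfl, rfl⟩ : a = x ∧ b = y := by
    simpa only [Prod.map, Prod.mk.injEq, g.injective.eq_iff] using hga
  exact hab

theorem outNbhd_apply (hg : IsAut E g) (x : V) : outNbhd E (g x) = g '' outNbhd E x := by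
  ext z
  obtain ⟨z, rfl⟩ := g.surjective z
  simp [outNbhd, hg.apply_apply_iff]

theorem inNbhd_apply (hg : IsAut E g) (x : V) : inNbhd E (g x) = g '' inNbhd E x := by
  ext z
  obtain ⟨z, rfl⟩ := g.surjective z
  simp [inNbhd, hg.apply_apply_iff]

theorem dotSim_apply_of_subset_or_subset (hg : IsAut E g) {x : V}
    (hout : outNbhd E x ⊆ outNbhd E (g x) ∨ outNbhd E (g x) ⊆ outNbhd E x)
    (hin : inNbhd E x ⊆ inNbhd E (g x) ∨ inNbhd E (g x) ⊆ inNbhd E x) :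
    dotSim E x (g x) := by
  refine dotSim_iff.mpr ⟨Set.eq_of_subset_or_subset_of_ncard_eq hout ?_,
    Set.eq_of_subset_or_subset_of_ncard_eq hin ?_⟩
  · rw [hg.outNbhd_apply, Set.ncard_image_of_injective _ g.injective]
  · rw [hg.inNbhd_apply, Set.ncard_image_of_injective _ g.injective]

end IsAut

theorem IsTwoColored.not_adj_of_adj_of_adj {U W : Set V} (hE : IsTwoColored E U W)
    {a b c : V} (hac : E a c) (hbc : E b c) : ¬E a b := by
  obtain ⟨-, hdisj, hedge⟩ := hE
  have := hdisj a; have := hdisj b; have := hdisj c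
  have := hedge a c hac; have := hedge b c hbc
  intro hab
  have := hedge a b hab
  tauto

namespace IsQBMG

variable {U W : Set V}

theorem outNbhd_subset_or_subset (hG : IsQBMG E U W) {u u' v : V} (hu : E u v) (hu' : E u' v) :
    outNbhd E u ⊆ outNbhd E u' ∨ outNbhd E u' ⊆ outNbhd E u :=
  hG.2.2.2.2 u u' v hu hu'

/-- If `w ∈ N⁻(u) \ N⁻(u')` and `w' ∈ N⁻(u') \ N⁻(u)`, then (N1) forces the edge `u' w`,
and (N2) applied to `w' u' w u` gives the forbidden edge `w' u`. -/
theorem inNbhd_subset_or_subset (hG : IsQBMG E U W) {u u' v : V} (hu : E u v) (hu' : E u' v) :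
    inNbhd E u ⊆ inNbhd E u' ∨ inNbhd E u' ⊆ inNbhd E u := by
  obtain ⟨-, hcol, hN1, hN2, -⟩ := hG
  by_contra! ⟨hnot, hnot'⟩
  obtain ⟨w, hwu, hwu'⟩ := Set.not_subset.mp hnot
  obtain ⟨w', hw'u', hw'u⟩ := Set.not_subset.mp hnot'
  have hw : w ≠ u' := by
    rintro rfl
    exact hcol.not_adj_of_adj_of_adj hu' hu hwu
  have hu'w : E u' w := by
    by_contra hu'w
    exact hN1 w u' hw hwu' hu'w v u ⟨hwu, hu', hu⟩
  exact hw'u (hN2 w' u' w u hw'u' hu'w hwu)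

end IsQBMG

end Digraph

theorem stmt_10_general {V : Type*} [Fintype V] (E : V → V → Prop) (U W : Set V)
    (hG : IsQBMG E U W) (hthin : ∀ x y, dotSim E x y → x = y)
    (g : Equiv.Perm V) (hg : IsAut E g) (v : V) (hv : g v = v) :
    ∀ u, E u v → g u = u := by
  intro u hu
  have hgu : E (g u) v := hv ▸ hg u v hu
  exact (hthin u (g u) (hg.dotSim_apply_of_subset_or_subset
    (hG.outNbhd_subset_or_subset hu hgu) (hG.inNbhd_subset_or_subset hu hgu))).symm

/-- Let `G` be a finite thin 2-qBMG.  If an automorphism `g` of `G`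
fixes a vertex `v`, then `g` fixes every vertex in the in-neighborhood `N⁻(v)`. -/
theorem stmt_10 {V : Type*} [Fintype V] [DecidableEq V] (E : V → V → Prop) (U W : Set V)
    (hG : IsQBMG E U W) (hthin : ∀ x y, dotSim E x y → x = y)
    (g : Equiv.Perm V) (hg : IsAut E g) (v : V) (hv : g v = v) :
    ∀ u, E u v → g u = u :=
  stmt_10_general E U W hG hthin g hg v hv
end

section
/- Let G be a finite thin 2-qBMG with color classes U and W such that |U| = |W| = n and both U and W are orbits of Aut_I(G). Then either the edge set E is a union of pairwise vertex-disjoint non-symmetric edges, or E is a union of pairwise vertex-disjoint symmetric edges; moreover Aut_I(G) is isomorphic to the symmetric group Sym(n). -/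
/-- `O` is an orbit of `Aut_I(G)` on the vertex set. -/
def IsAutIOrbit {V : Type*} (E : V → V → Prop) (U W : Set V) (O : Set V) : Prop :=
  O.Nonempty ∧ ∀ x ∈ O, ∀ y, (y ∈ O ↔ ∃ g : Equiv.Perm V, IsAutI E U W g ∧ g x = y)

/-- The edge set is a union of pairwise vertex-disjoint (single) edges: two edges
either coincide or share no endpoint. -/
def PairwiseDisjointEdges {V : Type*} (E : V → V → Prop) : Prop :=
  ∀ u v u' v', E u v → E u' v' →
    (u = u' ∧ v = v') ∨ (u ≠ u' ∧ u ≠ v' ∧ v ≠ u' ∧ v ≠ v')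

/-- The edge set is a union of pairwise vertex-disjoint symmetric edges: two edges
either form the same (possibly reversed) pair or share no endpoint. -/
def PairwiseDisjointSymEdges {V : Type*} (E : V → V → Prop) : Prop :=
  ∀ u v u' v', E u v → E u' v' →
    (u = u' ∧ v = v') ∨ (u = v' ∧ v = u') ∨ (u ≠ u' ∧ u ≠ v' ∧ v ≠ u' ∧ v ≠ v')

/-!
Transitivity of `Aut_I(G)` on each color class makes in- and out-degrees constant on `U` and on
`W`, so an inclusion between neighbourhoods of equally colored vertices is an equality. If edges
leave both classes, then along `u → w → x` axiom (N2) gives `N⁺(x) ⊆ N⁺(u)` and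
`N⁻(u) ⊆ N⁻(x)`, hence `x = u` by thinness: every edge is symmetric, and (N2) with thinness
then leaves each vertex a single neighbour. If edges leave only `U`, (N3) makes two tails of a
common head equivalent, and then two heads of a common tail. In every case each vertex has
exactly one neighbour, its partner.

A color-preserving automorphism commutes with the partner map, so it is determined by its
restriction to `U`. Conversely a permutation of `U` extends to `W` by conjugating with the
partner map, and this is an automorphism because, by transitivity on the classes, whether the
edge between `x` and its partner points away from `x` depends only on the color of `x`.
-/

open Equiv

section

variable {V : Type*} {E : V → V → Prop} {U W : Set V} {u v w x y : V}

namespace IsTwoColored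

theorem symm (h : IsTwoColored E U W) : IsTwoColored E W U :=
  ⟨fun v => (h.1 v).symm, fun v hv => h.2.1 v hv.symm, fun a b hab => (h.2.2 a b hab).symm⟩

theorem notMem_right (h : IsTwoColored E U W) (hx : x ∈ U) : x ∉ W :=
  fun hxW => h.2.1 x ⟨hx, hxW⟩

theorem mem_right_of_notMem_left (h : IsTwoColored E U W) (hx : x ∉ U) : x ∈ W :=
  (h.1 x).resolve_left hx

theorem head_mem_right (h : IsTwoColored E U W) (hxy : E x y) (hx : x ∈ U) : y ∈ W :=
  ((h.2.2 x y hxy).resolve_right fun h' => h.notMem_right hx h'.1).2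

theorem tail_mem_right (h : IsTwoColored E U W) (hxy : E x y) (hy : y ∈ U) : x ∈ W :=
  ((h.2.2 x y hxy).resolve_left fun h' => h.notMem_right hy h'.2).1

theorem tail_mem_left (h : IsTwoColored E U W) (hnoW : ∀ w ∈ W, ∀ x, ¬E w x) (hxy : E x y) :
    x ∈ U :=
  (h.1 x).resolve_right fun hx => hnoW x hx y hxy

end IsTwoColored

section Automorphism

variable [Finite V]

def autISubmonoid (E : V → V → Prop) (U W : Set V) : Submonoid (Perm V) where
  carrier := {π | IsAutI E U W π}
  one_mem' := ⟨fun _ _ h => h, fun _ h => h, fun _ h => h⟩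
  mul_mem' hf hg :=
    ⟨fun a b h => hf.1 _ _ (hg.1 a b h), fun a ha => hf.2.1 _ (hg.2.1 a ha),
      fun a ha => hf.2.2 _ (hg.2.2 a ha)⟩

def autI (E : V → V → Prop) (U W : Set V) : Subgroup (Perm V) where
  toSubmonoid := autISubmonoid E U W
  inv_mem' {f} hf := Submonoid.powers_le.2 hf <|
    mem_powers_iff_mem_zpowers.2 (inv_mem (Subgroup.mem_zpowers f))

theorem mem_autI {π : Perm V} : π ∈ autI E U W ↔ IsAutI E U W π := Iff.rfl

theorem edge_apply_iff {π : Perm V} (hπ : π ∈ autI E U W) : E (π u) (π v) ↔ E u v :=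
  ⟨fun h => by simpa using (inv_mem hπ).1 _ _ h, hπ.1 u v⟩

theorem mem_left_apply_iff (hcol : IsTwoColored E U W) {π : Perm V} (hπ : π ∈ autI E U W) :
    π x ∈ U ↔ x ∈ U :=
  ⟨fun h => by_contra fun hx => hcol.notMem_right h (hπ.2.2 x (hcol.mem_right_of_notMem_left hx)),
    hπ.2.1 x⟩

end Automorphism

theorem ncard_setOf_apply_eq {R : V → V → Prop} (π : Perm V) (hπ : ∀ a b, R (π a) (π b) ↔ R a b)
    (x : V) : {z | R (π x) z}.ncard = {z | R x z}.ncard := by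
  have : {z | R (π x) z} = π '' {z | R x z} := by
    ext z
    simp only [Set.mem_image_equiv, Set.mem_ofPred_eq, ← hπ x, Equiv.apply_symm_apply]
  rw [this, Set.ncard_image_of_injective _ π.injective]

def DegreeRegularOn (E : V → V → Prop) (O : Set V) : Prop :=
  ∀ x ∈ O, ∀ y ∈ O, {z | E x z}.ncard = {z | E y z}.ncard ∧ {z | E z x}.ncard = {z | E z y}.ncard

theorem IsAutIOrbit.degreeRegularOn [Finite V] {O : Set V} (h : IsAutIOrbit E U W O) :
    DegreeRegularOn E O := by
  intro x hx y hy
  obtain ⟨π, hπ, rfl⟩ := (h.2 x hx y).1 hy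
  have hπ' : π ∈ autI E U W := mem_autI.2 hπ
  exact ⟨(ncard_setOf_apply_eq π (fun _ _ => edge_apply_iff hπ') x).symm,
    (ncard_setOf_apply_eq (R := flip E) π (fun _ _ => edge_apply_iff (E := E) hπ') x).symm⟩

namespace DegreeRegularOn

variable [Finite V] {O : Set V}

theorem exists_out (h : DegreeRegularOn E O) (hx : x ∈ O) (hy : y ∈ O) (hxz : E x u) :
    ∃ z, E y z :=
  (Set.ncard_pos).1 ((h x hx y hy).1 ▸ (Set.ncard_pos).2 ⟨u, hxz⟩)

theorem exists_in (h : DegreeRegularOn E O) (hx : x ∈ O) (hy : y ∈ O) (hzx : E u x) :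
    ∃ z, E z y :=
  (Set.ncard_pos).1 ((h x hx y hy).2 ▸ (Set.ncard_pos).2 ⟨u, hzx⟩)

theorem out_eq_of_subset (h : DegreeRegularOn E O) (hx : x ∈ O) (hy : y ∈ O)
    (hsub : {z | E x z} ⊆ {z | E y z}) : {z | E x z} = {z | E y z} :=
  Set.eq_of_subset_of_ncard_le hsub (h y hy x hx).1.le

theorem in_eq_of_subset (h : DegreeRegularOn E O) (hx : x ∈ O) (hy : y ∈ O)
    (hsub : {z | E z x} ⊆ {z | E z y}) : {z | E z x} = {z | E z y} :=
  Set.eq_of_subset_of_ncard_le hsub (h y hy x hx).2.le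

end DegreeRegularOn

theorem head_unique_of_symm (hN2 : AxN2 E) (hthin : ∀ x y, dotSim E x y → x = y)
    (hsymm : ∀ x y, E x y → E y x) (hv : E u v) (hw : E u w) : v = w :=
  hthin v w
    ⟨fun z => ⟨fun hz => hN2 w u v z (hsymm _ _ hw) hv hz,
        fun hz => hN2 v u w z (hsymm _ _ hv) hw hz⟩,
      fun z => ⟨fun hz => hN2 z v u w hz (hsymm _ _ hv) hw,
        fun hz => hN2 z w u v hz (hsymm _ _ hw) hv⟩⟩

section Thin

variable [Finite V]

theorem edge_symm_of_degreeRegularOn (hcol : IsTwoColored E U W) (hN2 : AxN2 E)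
    (hthin : ∀ x y, dotSim E x y → x = y) (hreg : DegreeRegularOn E U)
    (houtW : ∀ w ∈ W, ∃ x, E w x) (hu : u ∈ U) (huw : E u w) : E w u := by
  have hw : w ∈ W := hcol.head_mem_right huw hu
  obtain ⟨x, hwx⟩ := houtW w hw
  have hx : x ∈ U := hcol.symm.head_mem_right hwx hw
  have hout := hreg.out_eq_of_subset hx hu fun z hz => hN2 u w x z huw hwx hz
  have hin := hreg.in_eq_of_subset hu hx fun z hz => hN2 z u w x hz huw hwx
  obtain rfl : u = x :=
    hthin u x ⟨fun z => (Set.ext_iff.1 hout z).symm, fun z => Set.ext_iff.1 hin z⟩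
  exact hwx

theorem tail_unique_of_noOut (hcol : IsTwoColored E U W) (hN3 : AxN3 E)
    (hthin : ∀ x y, dotSim E x y → x = y) (hreg : DegreeRegularOn E U)
    (hnoW : ∀ w ∈ W, ∀ x, ¬E w x) (hu : E u w) (hv : E v w) : u = v := by
  have huU := hcol.tail_mem_left hnoW hu
  have hvU := hcol.tail_mem_left hnoW hv
  have hnoIn : ∀ z x, x ∈ U → ¬E z x := fun z x hx hzx =>
    hnoW z (hcol.tail_mem_right hzx hx) x hzx
  have hout : {z | E u z} = {z | E v z} := by
    rcases hN3 u v w hu hv with hsub | hsub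
    · exact hreg.out_eq_of_subset huU hvU hsub
    · exact (hreg.out_eq_of_subset hvU huU hsub).symm
  exact hthin u v ⟨fun z => Set.ext_iff.1 hout z,
    fun z => iff_of_false (hnoIn z u huU) (hnoIn z v hvU)⟩

theorem head_unique_of_noOut (hcol : IsTwoColored E U W) (hN3 : AxN3 E)
    (hthin : ∀ x y, dotSim E x y → x = y) (hreg : DegreeRegularOn E U)
    (hnoW : ∀ w ∈ W, ∀ x, ¬E w x) (hv : E u v) (hw : E u w) : v = w := by
  have hinj : ∀ {a b c}, E a c → E b c → a = b := tail_unique_of_noOut hcol hN3 hthin hreg hnoW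
  refine hthin v w ⟨fun z => iff_of_false (hnoW v ?_ z) (hnoW w ?_ z), fun z => ?_⟩
  · exact hcol.head_mem_right hv (hcol.tail_mem_left hnoW hv)
  · exact hcol.head_mem_right hw (hcol.tail_mem_left hnoW hw)
  · exact ⟨fun hz => hinj hz hv ▸ hw, fun hz => hinj hz hw ▸ hv⟩

end Thin

def IsPerfectMatching (E : V → V → Prop) : Prop :=
  ∀ v, ∃! x, E v x ∨ E x v

theorem PairwiseDisjointSymEdges.pairwiseDisjointEdges (h : PairwiseDisjointSymEdges E)
    (hasymm : ∀ x y, E x y → ¬E y x) : PairwiseDisjointEdges E := by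
  intro u v u' v' huv hu'v'
  rcases h u v u' v' huv hu'v' with h | ⟨rfl, rfl⟩ | h
  · exact Or.inl h
  · exact (hasymm _ _ huv hu'v').elim
  · exact Or.inr h

namespace IsPerfectMatching

noncomputable def partner (h : IsPerfectMatching E) (v : V) : V :=
  (h v).exists.choose

theorem adj_partner (h : IsPerfectMatching E) (v : V) :
    E v (h.partner v) ∨ E (h.partner v) v :=
  (h v).exists.choose_spec

theorem eq_partner (h : IsPerfectMatching E) (hx : E v x ∨ E x v) : x = h.partner v :=
  (h v).unique hx (h.adj_partner v)

theorem partner_involutive (h : IsPerfectMatching E) : Function.Involutive h.partner :=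
  fun v => (h.eq_partner (h.adj_partner v).symm).symm

theorem apply_partner (h : IsPerfectMatching E) {π : Perm V} (hπ : IsAut E π) (v : V) :
    π (h.partner v) = h.partner (π v) :=
  h.eq_partner ((h.adj_partner v).imp (hπ _ _) (hπ _ _))

theorem partner_mem_right (h : IsPerfectMatching E) (hcol : IsTwoColored E U W) (hv : v ∈ U) :
    h.partner v ∈ W :=
  (h.adj_partner v).elim (hcol.head_mem_right · hv) (hcol.tail_mem_right · hv)

theorem partner_mem_left_iff (h : IsPerfectMatching E) (hcol : IsTwoColored E U W) :
    h.partner v ∈ U ↔ v ∉ U :=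
  ⟨fun hp hv => hcol.notMem_right hp (h.partner_mem_right hcol hv),
    fun hv => h.partner_mem_right hcol.symm (hcol.mem_right_of_notMem_left hv)⟩

theorem pairwiseDisjointSymEdges (h : IsPerfectMatching E) : PairwiseDisjointSymEdges E := by
  intro u v u' v' huv hu'v'
  by_cases hu : u = u'
  · subst hu
    exact Or.inl ⟨rfl, (h u).unique (Or.inl huv) (Or.inl hu'v')⟩
  by_cases hu' : u = v'
  · subst hu'
    exact Or.inr (Or.inl ⟨rfl, (h u).unique (Or.inl huv) (Or.inr hu'v')⟩)
  refine Or.inr (Or.inr ⟨hu, hu', ?_, ?_⟩)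
  · rintro rfl
    exact hu' ((h v).unique (Or.inr huv) (Or.inl hu'v'))
  · rintro rfl
    exact hu ((h v).unique (Or.inr huv) (Or.inr hu'v'))

theorem edge_partner_of_isAutIOrbit (h : IsPerfectMatching E) {O : Set V}
    (hO : IsAutIOrbit E U W O) (hx : x ∈ O) (hy : y ∈ O) (hxe : E x (h.partner x)) :
    E y (h.partner y) := by
  obtain ⟨π, hπ, rfl⟩ := (hO.2 x hx y).1 hy
  rw [← h.apply_partner hπ.1]
  exact hπ.1 _ _ hxe

end IsPerfectMatching

section Structure

variable [Finite V]

theorem symm_and_isPerfectMatching (hcol : IsTwoColored E U W) (hN2 : AxN2 E)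
    (hthin : ∀ x y, dotSim E x y → x = y) (hregU : DegreeRegularOn E U)
    (hregW : DegreeRegularOn E W) (hU : ∃ u ∈ U, ∃ w, E u w) (hW : ∃ w ∈ W, ∃ x, E w x) :
    (∀ x y, E x y → E y x) ∧ IsPerfectMatching E := by
  obtain ⟨u₀, hu₀, w₀, hw₀⟩ := hU
  obtain ⟨w₁, hw₁, x₁, hx₁⟩ := hW
  have houtU : ∀ u ∈ U, ∃ w, E u w := fun u hu => hregU.exists_out hu₀ hu hw₀
  have houtW : ∀ w ∈ W, ∃ x, E w x := fun w hw => hregW.exists_out hw₁ hw hx₁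
  have hsymm : ∀ x y, E x y → E y x := fun x y hxy => (hcol.1 x).elim
    (fun hx => edge_symm_of_degreeRegularOn hcol hN2 hthin hregU houtW hx hxy)
    (fun hx => edge_symm_of_degreeRegularOn hcol.symm hN2 hthin hregW houtU hx hxy)
  refine ⟨hsymm, fun v => ?_⟩
  obtain ⟨w, hvw⟩ : ∃ w, E v w := (hcol.1 v).elim (houtU v) (houtW v)
  exact ⟨w, Or.inl hvw, fun x hx =>
    head_unique_of_symm hN2 hthin hsymm (hx.elim id (hsymm _ _)) hvw⟩

theorem asymm_and_isPerfectMatching (hcol : IsTwoColored E U W) (hN3 : AxN3 E)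
    (hthin : ∀ x y, dotSim E x y → x = y) (hregU : DegreeRegularOn E U)
    (hregW : DegreeRegularOn E W) (hU : ∃ u ∈ U, ∃ w, E u w) (hnoW : ∀ w ∈ W, ∀ x, ¬E w x) :
    (∀ x y, E x y → ¬E y x) ∧ IsPerfectMatching E := by
  obtain ⟨u₀, hu₀, w₀, hw₀⟩ := hU
  have hheadW : ∀ {x y}, E x y → y ∈ W := fun hxy =>
    hcol.head_mem_right hxy (hcol.tail_mem_left hnoW hxy)
  refine ⟨fun x y hxy hyx => hnoW y (hheadW hxy) x hyx, fun v => ?_⟩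
  rcases hcol.1 v with hv | hv
  · obtain ⟨w, hvw⟩ := hregU.exists_out hu₀ hv hw₀
    refine ⟨w, Or.inl hvw, fun x hx => hx.elim
      (fun hvx => head_unique_of_noOut hcol hN3 hthin hregU hnoW hvx hvw)
      (fun hxv => (hcol.notMem_right hv (hheadW hxv)).elim)⟩
  · obtain ⟨u, huv⟩ := hregW.exists_in (hheadW hw₀) hv hw₀
    exact ⟨u, Or.inr huv, fun x hx => hx.elim (fun hvx => (hnoW v hv x hvx).elim)
      (fun hxv => tail_unique_of_noOut hcol hN3 hthin hregU hnoW hxv huv)⟩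

theorem isPerfectMatching_and_asymm_or_symm (hcol : IsTwoColored E U W) (hN2 : AxN2 E)
    (hN3 : AxN3 E) (hthin : ∀ x y, dotSim E x y → x = y) (hregU : DegreeRegularOn E U)
    (hregW : DegreeRegularOn E W) (hUne : U.Nonempty) (hWne : W.Nonempty) :
    IsPerfectMatching E ∧ ((∀ x y, E x y → ¬E y x) ∨ (∀ x y, E x y → E y x)) := by
  by_cases hU : ∃ u ∈ U, ∃ w, E u w <;> by_cases hW : ∃ w ∈ W, ∃ x, E w x
  · obtain ⟨hsymm, hmatch⟩ := symm_and_isPerfectMatching hcol hN2 hthin hregU hregW hU hW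
    exact ⟨hmatch, Or.inr hsymm⟩
  · push Not at hW
    obtain ⟨hasymm, hmatch⟩ := asymm_and_isPerfectMatching hcol hN3 hthin hregU hregW hU hW
    exact ⟨hmatch, Or.inl hasymm⟩
  · push Not at hU
    obtain ⟨hasymm, hmatch⟩ := asymm_and_isPerfectMatching hcol.symm hN3 hthin hregW hregU hW hU
    exact ⟨hmatch, Or.inl hasymm⟩
  · push Not at hU hW
    obtain ⟨u, hu⟩ := hUne
    obtain ⟨w, hw⟩ := hWne
    have hnoE : ∀ x y, ¬E x y := fun x y => (hcol.1 x).elim (hU x · y) (hW x · y)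
    have huw : u = w := hthin u w
      ⟨fun _ => iff_of_false (hnoE _ _) (hnoE _ _), fun _ => iff_of_false (hnoE _ _) (hnoE _ _)⟩
    exact (hcol.notMem_right hu (huw ▸ hw)).elim

end Structure

theorem exists_perm_eq_on_commute {M : V → V} (hM : Function.Involutive M)
    (hMU : ∀ v, M v ∈ U ↔ v ∉ U) (σ : Perm U) :
    ∃ π : Perm V, (∀ v : U, π v = σ v) ∧ ∀ v, π (M v) = M (π v) := by
  classical
  set τ : Perm V := Perm.ofSubtype σ
  have hτ : ∀ v, v ∉ U → τ v = v := fun v hv => Perm.ofSubtype_apply_of_not_mem σ hv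
  have hτU : ∀ v (hv : v ∈ U), τ v = σ ⟨v, hv⟩ := fun v hv => Perm.ofSubtype_apply_of_mem σ hv
  have hMσ : ∀ v : U, M (σ v) ∉ U := fun v h => (hMU _).1 h (σ v).2
  set π : Perm V := τ * (hM.toPerm M * τ * hM.toPerm M)
  have hπ : ∀ v, π v = τ (M (τ (M v))) := fun v => rfl
  have hπU : ∀ v : U, π v = σ v := fun v => by
    rw [hπ, hτ _ fun h => (hMU v).1 h v.2, hM, hτU _ v.2]
  have hπW : ∀ v (hv : v ∉ U), π v = M (σ ⟨M v, (hMU v).2 hv⟩) := fun v hv => by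
    rw [hπ, hτU _ ((hMU v).2 hv), hτ _ (hMσ _)]
  refine ⟨π, hπU, fun v => ?_⟩
  by_cases hv : v ∈ U
  · have hMv : M v ∉ U := fun h => (hMU v).1 h hv
    have : (⟨M (M v), (hMU _).2 hMv⟩ : U) = ⟨v, hv⟩ := Subtype.ext (hM v)
    rw [hπW _ hMv, this, hπU ⟨v, hv⟩]
  · rw [hπU ⟨M v, (hMU v).2 hv⟩, hπW v hv, hM]

theorem IsPerfectMatching.nonempty_autI_mulEquiv_perm [Finite V] (h : IsPerfectMatching E)
    (hcol : IsTwoColored E U W)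
    (hdirU : ∀ x ∈ U, ∀ y ∈ U, E x (h.partner x) → E y (h.partner y))
    (hdirW : ∀ x ∈ W, ∀ y ∈ W, E x (h.partner x) → E y (h.partner y)) :
    Nonempty (autI E U W ≃* Perm U) := by
  classical
  let res : autI E U W →* Perm U :=
    { toFun := fun π => π.1.subtypePerm fun _ => mem_left_apply_iff hcol π.2
      map_one' := rfl
      map_mul' := fun _ _ => rfl }
  refine ⟨MulEquiv.ofBijective res ⟨fun π ρ hπρ => ?_, fun σ => ?_⟩⟩
  · have hπρU : ∀ v ∈ U, π.1 v = ρ.1 v := fun v hv =>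
      congrArg Subtype.val (Perm.ext_iff.1 hπρ ⟨v, hv⟩)
    ext v
    by_cases hv : v ∈ U
    · exact hπρU v hv
    · rw [← h.partner_involutive v, h.apply_partner π.2.1, h.apply_partner ρ.2.1,
        hπρU _ ((h.partner_mem_left_iff hcol).2 hv)]
  · obtain ⟨π, hπσ, hπM⟩ := exists_perm_eq_on_commute h.partner_involutive
      (fun v => h.partner_mem_left_iff hcol) σ
    have hπU : ∀ v, π v ∈ U ↔ v ∈ U := by
      intro v
      refine ⟨fun hπv => by_contra fun hv => ?_, fun hv => hπσ ⟨v, hv⟩ ▸ (σ ⟨v, hv⟩).2⟩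
      have hMv : h.partner v ∈ U := (h.partner_mem_left_iff hcol).2 hv
      rw [← h.partner_involutive v, hπM, h.partner_mem_left_iff hcol] at hπv
      exact hπv (hπσ ⟨_, hMv⟩ ▸ (σ ⟨_, hMv⟩).2)
    have hπW : ∀ v ∈ W, π v ∈ W := fun v hv => hcol.mem_right_of_notMem_left
      fun h' => hcol.notMem_right ((hπU v).1 h') hv
    have hπ : π ∈ autI E U W := by
      refine ⟨fun x y hxy => ?_, fun v hv => (hπU v).2 hv, hπW⟩
      obtain rfl := h.eq_partner (Or.inl hxy)
      rw [hπM]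
      rcases hcol.1 x with hx | hx
      · exact hdirU x hx _ ((hπU x).2 hx) hxy
      · exact hdirW x hx _ (hπW x hx) hxy
    exact ⟨⟨π, hπ⟩, Perm.ext fun v => Subtype.ext (hπσ v)⟩

end

theorem stmt_12_general {V : Type*} [Fintype V] (E : V → V → Prop) (U W : Set V)
    (n : ℕ) (hG : IsQBMG E U W) (hthin : ∀ x y, dotSim E x y → x = y)
    (hU : U.ncard = n)
    (hOrbU : IsAutIOrbit E U W U) (hOrbW : IsAutIOrbit E U W W) :
    (((∀ u v, E u v → ¬E v u) ∧ PairwiseDisjointEdges E) ∨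
     ((∀ u v, E u v → E v u) ∧ PairwiseDisjointSymEdges E)) ∧
    ∃ H : Subgroup (Equiv.Perm V),
      (∀ π : Equiv.Perm V, π ∈ H ↔ IsAutI E U W π) ∧
      Nonempty (H ≃* Equiv.Perm (Fin n)) := by
  obtain ⟨-, hcol, -, hN2, hN3⟩ := hG
  obtain ⟨hmatch, hdir⟩ := isPerfectMatching_and_asymm_or_symm hcol hN2 hN3 hthin
    hOrbU.degreeRegularOn hOrbW.degreeRegularOn hOrbU.1 hOrbW.1
  obtain ⟨e⟩ := hmatch.nonempty_autI_mulEquiv_perm hcol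
    (fun _ hx _ hy => hmatch.edge_partner_of_isAutIOrbit hOrbU hx hy)
    (fun _ hx _ hy => hmatch.edge_partner_of_isAutIOrbit hOrbW hx hy)
  refine ⟨?_, autI E U W, fun _ => mem_autI,
    ⟨e.trans (Finite.equivFinOfCardEq (by rwa [Nat.card_coe_set_eq])).permCongrHom⟩⟩
  rcases hdir with hasymm | hsymm
  · exact Or.inl ⟨hasymm, hmatch.pairwiseDisjointSymEdges.pairwiseDisjointEdges hasymm⟩
  · exact Or.inr ⟨hsymm, hmatch.pairwiseDisjointSymEdges⟩

/-- Let `G` be a finite thin 2-qBMG with `|U| = |W| = n` whose color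
classes `U`, `W` are both orbits of `Aut_I(G)`.  Then `E` is either a union of pairwise
vertex-disjoint non-symmetric edges or a union of pairwise vertex-disjoint symmetric
edges, and `Aut_I(G)` is isomorphic to the symmetric group on `n` letters. -/
theorem stmt_12 {V : Type*} [Fintype V] [DecidableEq V] (E : V → V → Prop) (U W : Set V)
    (n : ℕ) (hG : IsQBMG E U W) (hthin : ∀ x y, dotSim E x y → x = y)
    (hU : U.ncard = n) (hW : W.ncard = n)
    (hOrbU : IsAutIOrbit E U W U) (hOrbW : IsAutIOrbit E U W W) :
    (((∀ u v, E u v → ¬E v u) ∧ PairwiseDisjointEdges E) ∨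
     ((∀ u v, E u v → E v u) ∧ PairwiseDisjointSymEdges E)) ∧
    ∃ H : Subgroup (Equiv.Perm V),
      (∀ π : Equiv.Perm V, π ∈ H ↔ IsAutI E U W π) ∧
      Nonempty (H ≃* Equiv.Perm (Fin n)) :=
  stmt_12_general E U W n hG hthin hU hOrbU hOrbW
end

section
/- For any two integers m, s ≥ 2 there exists a proper, thin 2-qBMG on 2ms vertices (with color classes of size ms each) whose group Aut_I(G) of color-preserving automorphisms contains a subgroup isomorphic to the symmetric group Sym(m). -/
section Aux

variable (m s : ℕ)

/-- auxiliary: evens of `Fin (2*s)` paired with `Fin m` ↔ `Fin m × Fin s` -/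
def evenEquiv : {p : Fin m × Fin (2*s) // (p.2 : ℕ) % 2 = 0} ≃ Fin m × Fin s where
  toFun p := (p.1.1, ⟨(p.1.2 : ℕ) / 2, by have := p.1.2.isLt; omega⟩)
  invFun q := ⟨(q.1, ⟨2 * (q.2 : ℕ), by have := q.2.isLt; omega⟩), show (2 * (q.2 : ℕ)) % 2 = 0 by omega⟩
  left_inv p := by
    ext
    · rfl
    · have h := p.2
      simp only []
      omega
  right_inv q := by
    ext
    · rfl
    · show (2 * (q.2 : ℕ)) / 2 = (q.2 : ℕ)
      omega

def oddEquiv : {p : Fin m × Fin (2*s) // (p.2 : ℕ) % 2 = 1} ≃ Fin m × Fin s where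
  toFun p := (p.1.1, ⟨(p.1.2 : ℕ) / 2, by have := p.1.2.isLt; omega⟩)
  invFun q := ⟨(q.1, ⟨2 * (q.2 : ℕ) + 1, by have := q.2.isLt; omega⟩), show (2 * (q.2 : ℕ) + 1) % 2 = 1 by omega⟩
  left_inv p := by
    ext
    · rfl
    · have h := p.2
      simp only []
      omega
  right_inv q := by
    ext
    · rfl
    · show (2 * (q.2 : ℕ) + 1) / 2 = (q.2 : ℕ)
      omega

end Aux

/-- For any integers `m, s ≥ 2` there is a proper, thin 2-qBMG on
`2·m·s` vertices, with color classes of size `m·s` each, whose group of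
color-preserving automorphisms contains a subgroup isomorphic to `Sym(m)`. -/
theorem stmt_15 (m s : ℕ) (hm : 2 ≤ m) (hs : 2 ≤ s) :
    ∃ (V : Type) (_ : Fintype V) (_ : DecidableEq V)
      (E : V → V → Prop) (U W : Set V),
      IsQBMG E U W ∧
      (∀ x y, dotSim E x y → x = y) ∧
      (∃ u v w t, E u v ∧ E v w ∧ E w t) ∧
      Nat.card V = 2 * m * s ∧ U.ncard = m * s ∧ W.ncard = m * s ∧
      ∃ H : Subgroup (Equiv.Perm V),
        (∀ π ∈ H, IsAutI E U W π) ∧ Nonempty (H ≃* Equiv.Perm (Fin m)) := by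
  classical
  set V := Fin m × Fin (2*s) with hV
  set E : V → V → Prop := fun x y =>
    x.1 = y.1 ∧ (x.2 : ℕ) < (y.2 : ℕ) ∧ (x.2 : ℕ) % 2 ≠ (y.2 : ℕ) % 2 with hE
  set U : Set V := {p | (p.2 : ℕ) % 2 = 0} with hU
  set W : Set V := {p | (p.2 : ℕ) % 2 = 1} with hW
  refine ⟨V, inferInstance, inferInstance, E, U, W, ?_, ?_, ?_, ?_, ?_, ?_, ?_⟩
  · -- IsQBMG
    refine ⟨?_, ⟨?_, ?_, ?_⟩, ?_, ?_, ?_⟩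
    · intro v hv; exact absurd hv.2.1 (lt_irrefl _)
    · intro v; simp only [hU, hW, Set.mem_setOf_eq]; omega
    · intro v; simp only [hU, hW, Set.mem_setOf_eq]; omega
    · intro u v huv
      simp only [hU, hW, Set.mem_setOf_eq]
      have := huv.2.2
      omega
    · -- N1
      rintro u v hne huv hvu w t ⟨hut, hvw, htw⟩
      have h1 : u.1 = v.1 := by rw [hut.1, htw.1, ← hvw.1]
      have hne2 : (u.2 : ℕ) ≠ (v.2 : ℕ) := by
        intro h
        exact hne (Prod.ext h1 (Fin.ext h))
      have hp : (u.2 : ℕ) % 2 ≠ (v.2 : ℕ) % 2 := by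
        have := hut.2.2; have := htw.2.2; have := hvw.2.2; omega
      rcases lt_or_gt_of_ne hne2 with h | h
      · exact huv ⟨h1, h, hp⟩
      · exact hvu ⟨h1.symm, h, fun hh => hp hh.symm⟩
    · -- N2
      rintro u v w t ⟨h1, h2, h3⟩ ⟨h4, h5, h6⟩ ⟨h7, h8, h9⟩
      exact ⟨h1.trans (h4.trans h7), by omega, by omega⟩
    · -- N3
      rintro u v w ⟨h1, h2, h3⟩ ⟨h4, h5, h6⟩
      rcases le_or_gt (u.2 : ℕ) (v.2 : ℕ) with h | h
      · right
        rintro z ⟨g1, g2, g3⟩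
        exact ⟨h1.trans (h4.symm.trans g1), by omega, by omega⟩
      · left
        rintro z ⟨g1, g2, g3⟩
        exact ⟨h4.trans (h1.symm.trans g1), by omega, by omega⟩
  · -- thin
    have key : ∀ x y : V, dotSim E x y → (x.2 : ℕ) < (y.2 : ℕ) → False := by
      intro x y ⟨hout, _⟩ hlt
      have hy2 := y.2.isLt
      set z : V := (x.1, ⟨(x.2 : ℕ) + 1, by omega⟩) with hz
      have hxz : E x z := ⟨rfl, by simp [hz], by simp [hz]; omega⟩
      have hyz : E y z := (hout z).mp hxz
      have := hyz.2.1
      simp only [hz] at this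
      omega
    intro x y hsim
    rcases lt_trichotomy (x.2 : ℕ) (y.2 : ℕ) with h | h | h
    · exact absurd h (fun h => key x y hsim h)
    · -- same second coordinate; show same first
      have h2 : x.2 = y.2 := Fin.ext h
      -- find a neighbor of x to pin down the block
      have h1 : x.1 = y.1 := by
        by_cases h0 : (x.2 : ℕ) = 0
        · -- x has out-neighbor (x.1, 1)
          set z : V := (x.1, ⟨1, by omega⟩) with hz
          have hxz : E x z := ⟨rfl, by simp [hz]; omega, by simp [hz]; omega⟩
          have hyz : E y z := (hsim.1 z).mp hxz
          exact hyz.1.symm ▸ rfl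
        · -- x has in-neighbor (x.1, x.2 - 1)
          have hx2 := x.2.isLt
          set z : V := (x.1, ⟨(x.2 : ℕ) - 1, by omega⟩) with hz
          have hzx : E z x := ⟨rfl, by simp [hz]; omega, by simp [hz]; omega⟩
          have hzy : E z y := (hsim.2 z).mp hzx
          exact hzx.1.symm.trans hzy.1
      exact Prod.ext h1 h2
    · exact absurd h (fun h => key y x ⟨fun z => (hsim.1 z).symm, fun z => (hsim.2 z).symm⟩ h)
  · -- proper
    have h4 : 4 ≤ 2 * s := by omega
    refine ⟨(⟨0, by omega⟩, ⟨0, by omega⟩), (⟨0, by omega⟩, ⟨1, by omega⟩),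
           (⟨0, by omega⟩, ⟨2, by omega⟩), (⟨0, by omega⟩, ⟨3, by omega⟩), ?_, ?_, ?_⟩
    · exact ⟨rfl, by simp, by simp⟩
    · exact ⟨rfl, by simp, by simp⟩
    · exact ⟨rfl, by simp, by simp⟩
  · -- card
    simp only [hV, Nat.card_eq_fintype_card, Fintype.card_prod, Fintype.card_fin]
    ring
  · -- U.ncard
    have e : ↥U ≃ Fin m × Fin s :=
      (Equiv.subtypeEquivRight (fun p => Iff.rfl)).trans (evenEquiv m s)
    rw [← Nat.card_coe_set_eq, Nat.card_congr e, Nat.card_eq_fintype_card]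
    simp
  · -- W.ncard
    have e : ↥W ≃ Fin m × Fin s :=
      (Equiv.subtypeEquivRight (fun p => Iff.rfl)).trans (oddEquiv m s)
    rw [← Nat.card_coe_set_eq, Nat.card_congr e, Nat.card_eq_fintype_card]
    simp
  · -- subgroup
    set φ : Equiv.Perm (Fin m) →* Equiv.Perm V :=
      { toFun := fun π => Equiv.prodCongr π (Equiv.refl _)
        map_one' := by ext p <;> rfl
        map_mul' := by intro f g; ext p <;> rfl } with hφ
    have hinj : Function.Injective φ := by
      intro f g h
      ext i
      have h2 := congrFun (congrArg (fun π : Equiv.Perm V => (π : V → V)) h) (i, ⟨0, by omega⟩)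
      have h3 : f i = g i := congrArg Prod.fst h2
      exact congrArg Fin.val h3
    refine ⟨φ.range, ?_, ⟨(MonoidHom.ofInjective hinj).symm⟩⟩
    rintro π ⟨σ, rfl⟩
    refine ⟨?_, ?_, ?_⟩
    · rintro u v ⟨h1, h2, h3⟩
      exact ⟨by simp [hφ, Equiv.prodCongr, h1], h2, h3⟩
    · intro v hv; exact hv
    · intro v hv; exact hv
end

section
/- Let G be a finite 2-qBMG satisfying property (*), i.e., no two distinct symmetric edges of G have a common endpoint. Then every orientation O of G is a 2-qBMG (with the same color classes). -/
/-- `F` is an orientation of `E`: `F ⊆ E`, `F` keeps every non-symmetric edge of `E`,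
and from each symmetric edge of `E` it keeps exactly one of the two opposite edges. -/
def IsOrientation {V : Type*} (E F : V → V → Prop) : Prop :=
  (∀ u v, F u v → E u v) ∧
  (∀ u v, E u v → ¬E v u → F u v) ∧
  (∀ u v, E u v → E v u → (F u v ↔ ¬F v u))

/-!
An orientation `F` of `E` only loses one direction of each symmetric edge, so (N1) and
two-coloredness pass to `F` directly. For (N2) and (N3), the bi-transitivity of `E` turns any
configuration in which `F` could fail into two distinct symmetric edges of `E` sharing an
endpoint, which property (*) forbids.
-/

/-- Property (*). -/
def SymmEdgesDisjoint {V : Type*} (E : V → V → Prop) : Prop :=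
  ∀ u v w, E u v → E v u → E u w → E w u → v = w

namespace IsOrientation

variable {V : Type*} {E F : V → V → Prop}

theorem le (hF : IsOrientation E F) {u v : V} (h : F u v) : E u v :=
  hF.1 u v h

theorem asymm (hF : IsOrientation E F) {u v : V} (huv : F u v) : ¬F v u := fun hvu =>
  (hF.2.2 u v (hF.le huv) (hF.le hvu)).mp huv hvu

theorem or_swap_of_adj (hF : IsOrientation E F) {u v : V} (h : E u v) : F u v ∨ F v u := by
  by_cases hvu : E v u
  · by_cases hFvu : F v u
    · exact Or.inr hFvu
    · exact Or.inl ((hF.2.2 u v h hvu).mpr hFvu)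
  · exact Or.inl (hF.2.1 u v h hvu)

theorem irrefl (hF : IsOrientation E F) (hE : ∀ v, ¬E v v) (v : V) : ¬F v v :=
  fun h => hE v (hF.le h)

theorem isTwoColored (hF : IsOrientation E F) {U W : Set V} (hE : IsTwoColored E U W) :
    IsTwoColored F U W :=
  ⟨hE.1, hE.2.1, fun u v h => hE.2.2 u v (hF.le h)⟩

theorem axN1 (hF : IsOrientation E F) (h1 : AxN1 E) : AxN1 F := by
  rintro u v huv hFuv hFvu w t ⟨hut, hvw, htw⟩
  have not_adj : ∀ {a b}, ¬F a b → ¬F b a → ¬E a b := fun hab hba h =>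
    (hF.or_swap_of_adj h).elim hab hba
  exact h1 u v huv (not_adj hFuv hFvu) (not_adj hFvu hFuv) w t
    ⟨hF.le hut, hF.le hvw, hF.le htw⟩

theorem axN2 (hF : IsOrientation E F) (h2 : AxN2 E) (hstar : SymmEdgesDisjoint E) :
    AxN2 F := by
  intro u v w t huv hvw hwt
  have hut : E u t := h2 u v w t (hF.le huv) (hF.le hvw) (hF.le hwt)
  by_cases htu : E t u
  · -- `t u` and `t w` are symmetric edges at `t`, so `w = u` and `F` has both `u v` and `v u`
    have htw : E t w := h2 t u v w htu (hF.le huv) (hF.le hvw)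
    obtain rfl : u = w := hstar t u w htu hut htw (hF.le hwt)
    exact absurd hvw (hF.asymm huv)
  · exact hF.2.1 u t hut htu

theorem out_comparable_of_out_subset (hF : IsOrientation E F) (h2 : AxN2 E)
    (hstar : SymmEdgesDisjoint E) {u v : V} (hle : ∀ z, E u z → E v z) :
    (∀ z, F u z → F v z) ∨ (∀ z, F v z → F u z) := by
  by_cases hc : ∀ z, F u z → F v z
  · exact Or.inl hc
  push Not at hc
  obtain ⟨z, huz, hvz⟩ := hc
  have euz := hF.le huz
  have evz := hle z euz
  have ezv : E z v := by
    by_contra h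
    exact hvz (hF.2.1 v z evz h)
  have ezu : ¬E z u := by
    intro ezu
    obtain rfl : u = v := hstar z u v ezu euz ezv evz
    exact hvz huz
  -- `v z` is the symmetric edge at `v`, so no other out-neighbor `y` of `v` has `E y u`
  refine Or.inr fun y hvy => ?_
  have evy := hF.le hvy
  have euy : E u y := h2 u z v y euz ezv evy
  by_cases eyu : E y u
  · have eyv : E y v := h2 y u z v eyu euz ezv
    obtain rfl : y = z := hstar v y z evy eyv evz ezv
    exact absurd eyu ezu
  · exact hF.2.1 u y euy eyu

theorem axN3 (hF : IsOrientation E F) (h2 : AxN2 E) (h3 : AxN3 E)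
    (hstar : SymmEdgesDisjoint E) : AxN3 F := by
  intro u v w huw hvw
  rcases h3 u v w (hF.le huw) (hF.le hvw) with hle | hle
  · exact hF.out_comparable_of_out_subset h2 hstar hle
  · exact (hF.out_comparable_of_out_subset h2 hstar hle).symm

end IsOrientation

theorem stmt_16_general {V : Type*} (E F : V → V → Prop)
    (U W : Set V) (hG : IsQBMG E U W)
    (hstar : ∀ u v w, E u v → E v u → E u w → E w u → v = w)
    (hF : IsOrientation E F) :
    IsQBMG F U W := by
  obtain ⟨hirr, hcol, h1, h2, h3⟩ := hG
  exact ⟨hF.irrefl hirr, hF.isTwoColored hcol, hF.axN1 h1, hF.axN2 h2 hstar,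
    hF.axN3 h2 h3 hstar⟩

/-- Let `G` be a finite 2-qBMG satisfying property (*): no two
distinct symmetric edges of `G` have a common endpoint.  Then every orientation of `G`
is a 2-qBMG with the same color classes. -/
theorem stmt_16 {V : Type*} [Fintype V] [DecidableEq V] (E F : V → V → Prop)
    (U W : Set V) (hG : IsQBMG E U W)
    (hstar : ∀ u v w, E u v → E v u → E u w → E w u → v = w)
    (hF : IsOrientation E F) :
    IsQBMG F U W :=
  stmt_16_general E F U W hG hstar hF
end
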